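/- For each fixed cut-off value u_c in (0,1) and each KPP reaction function f, the unique propagation speed v*(u_c) of the permanent form travelling wave solution with cut-off u_c satisfies 0 < v*(u_c) < 2, where 2 is the minimum propagation speed of permanent form travelling waves in the absence of cut-off. -/

import Mathlib

open Real Filter Topology

/-- A KPP reaction function: `f ∈ C¹`, `f 0 = f 1 = 0`, `f' 0 = 1`, `f' 1 < 0`,
`0 < f u ≤ u` on `(0,1)` and `f u < 0` for `u > 1`. -/
def IsKPP (f : ℝ → ℝ) : Prop :=
  ContDiff ℝ 1 f ∧ f 0 = 0 ∧ f 1 = 0 ∧ deriv f 0 = 1 ∧ deriv f 1 < 0 ∧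
  (∀ u : ℝ, 0 < u → u < 1 → 0 < f u ∧ f u ≤ u) ∧
  (∀ u : ℝ, 1 < u → f u < 0)

/-- The cut-off reaction function: `f_c u = f u` for `u > u_c`, and `0` for `u ≤ u_c`. -/
noncomputable def cutoff (f : ℝ → ℝ) (uc : ℝ) : ℝ → ℝ :=
  fun u => if uc < u then f u else 0

/-- A permanent form travelling wave solution with cut-off `uc` and speed `v`. -/
def IsPTW (f : ℝ → ℝ) (uc v : ℝ) (U : ℝ → ℝ) : Prop :=
  ContDiff ℝ 1 U ∧
  (∀ y : ℝ, y ≠ 0 → ContDiffAt ℝ 2 U y) ∧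
  (∀ y : ℝ, y ≠ 0 → deriv (deriv U) y + v * deriv U y + cutoff f uc (U y) = 0) ∧
  U 0 = uc ∧
  (∀ y : ℝ, y < 0 → uc ≤ U y ∧ U y ≤ 1) ∧
  (∀ y : ℝ, 0 < y → 0 ≤ U y ∧ U y ≤ uc) ∧
  Tendsto U atBot (𝓝 1) ∧
  Tendsto U atTop (𝓝 0)

/-!
Ahead of the front the equation is `U'' + vU' = 0`, so `U' + vU` is constant there, and the
constant is `0` because `U → 0`. Hence `U' = -vU`: this forces `v > 0` (otherwise `U` would be
nondecreasing on `[0, ∞)`) and gives `U'(0) = -v u_c`.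

Behind the front, if `v ≥ 2` then `g = e^{vy/2} U` is convex, since
`e^{-vy/2} g'' = (v/2)² U - f_c(U) ≥ U - f_c(U) ≥ 0`. As `g'(0) = -v u_c / 2 < 0`, convexity gives
`g ≥ g(0) = u_c` on `y < 0`, contradicting `g → 0` as `y → -∞`.
-/

open Set

lemma eq_of_continuousOn_Ici_of_hasDerivAt_zero {F : ℝ → ℝ} {a x : ℝ}
    (hF : ContinuousOn F (Ici a)) (hF' : ∀ y > a, HasDerivAt F 0 y) (hx : a ≤ x) :
    F x = F a := by
  have hdiff : DifferentiableOn ℝ F (interior (Ici a)) := by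
    rw [interior_Ici]
    exact fun y hy => (hF' y hy).differentiableAt.differentiableWithinAt
  have hzero : ∀ y ∈ interior (Ici a), deriv F y = 0 := by
    rw [interior_Ici]
    exact fun y hy => (hF' y hy).deriv
  exact le_antisymm
    (antitoneOn_of_deriv_nonpos (convex_Ici a) hF hdiff (fun y hy => (hzero y hy).le)
      self_mem_Ici hx hx)
    (monotoneOn_of_deriv_nonneg (convex_Ici a) hF hdiff (fun y hy => (hzero y hy).ge)
      self_mem_Ici hx hx)

lemma eq_zero_of_tendsto_of_tendsto_deriv {f f' : ℝ → ℝ} {a b : ℝ}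
    (hf : ∀ x, HasDerivAt f (f' x) x) (ha : Tendsto f atTop (𝓝 a))
    (hb : Tendsto f' atTop (𝓝 b)) : b = 0 := by
  have hmvt : ∀ x : ℝ, ∃ ξ ∈ Ioo x (x + 1), f' ξ = (f (x + 1) - f x) / (x + 1 - x) :=
    fun x => exists_hasDerivAt_eq_slope f f' (lt_add_one x)
      (fun y _ => (hf y).continuousAt.continuousWithinAt) fun y _ => hf y
  choose ξ hξ hξ_eq using hmvt
  have hξ_top : Tendsto ξ atTop atTop := tendsto_atTop_mono (fun x => (hξ x).1.le) tendsto_id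
  have hincr : Tendsto (fun x => f (x + 1) - f x) atTop (𝓝 (a - a)) :=
    (ha.comp (tendsto_atTop_add_const_right _ 1 tendsto_id)).sub ha
  rw [sub_self] at hincr
  refine tendsto_nhds_unique (hb.comp hξ_top) (hincr.congr fun x => ?_)
  simp [hξ_eq]

-- `U'' + 2cU' + c²U = e^{-cy} (e^{cy} U)''`
lemma convexOn_exp_mul_mul_of_deriv2_nonneg {D : Set ℝ} (hD : Convex ℝ D)
    {U U' U'' : ℝ → ℝ} {c : ℝ}
    (hU : ∀ y, HasDerivAt U (U' y) y) (hU' : ∀ y ∈ interior D, HasDerivAt U' (U'' y) y)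
    (hnonneg : ∀ y ∈ interior D, 0 ≤ U'' y + 2 * c * U' y + c ^ 2 * U y) :
    ConvexOn ℝ D (fun y => exp (c * y) * U y) := by
  have hexp : ∀ y, HasDerivAt (fun y => exp (c * y)) (exp (c * y) * c) y := fun y => by
    simpa using ((hasDerivAt_id y).const_mul c).exp
  refine convexOn_of_hasDerivWithinAt2_nonneg hD (f' := fun y => exp (c * y) * (c * U y + U' y))
    (f'' := fun y => exp (c * y) * (U'' y + 2 * c * U' y + c ^ 2 * U y))
    (fun y _ => ((hexp y).mul (hU y)).continuousAt.continuousWithinAt)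
    (fun y _ => (((hexp y).mul (hU y)).congr_deriv (by ring)).hasDerivWithinAt)
    (fun y hy => (((hexp y).mul (((hU y).const_mul c).fun_add (hU' y hy))).congr_deriv
      (by ring)).hasDerivWithinAt)
    (fun y hy => mul_nonneg (exp_pos _).le (hnonneg y hy))

section

variable {U U' : ℝ → ℝ} {v : ℝ}

lemma deriv_add_mul_eq_zero_of_tendsto (hU : ∀ y, HasDerivAt U (U' y) y) (hU' : Continuous U')
    (hODE : ∀ y > 0, HasDerivAt U' (-(v * U' y)) y) (hlim : Tendsto U atTop (𝓝 0))
    {y : ℝ} (hy : 0 ≤ y) : U' y + v * U y = 0 := by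
  have hUc : Continuous U := continuous_iff_continuousAt.2 fun y => (hU y).continuousAt
  have hconst : ∀ y ≥ 0, U' y + v * U y = U' 0 + v * U 0 := fun y hy =>
    eq_of_continuousOn_Ici_of_hasDerivAt_zero (F := fun y => U' y + v * U y) (by fun_prop)
      (fun y hy => ((hODE y hy).fun_add ((hU y).const_mul v)).congr_deriv (by ring)) hy
  have hU'_lim : Tendsto U' atTop (𝓝 (U' 0 + v * U 0)) := by
    have := (tendsto_const_nhds (x := U' 0 + v * U 0)).sub (hlim.const_mul v)
    rw [mul_zero, sub_zero] at this
    refine this.congr' ?_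
    filter_upwards [eventually_ge_atTop 0] with y hy
    rw [← hconst y hy]
    ring
  rw [hconst y hy]
  exact eq_zero_of_tendsto_of_tendsto_deriv hU hlim hU'_lim

lemma coeff_pos_of_tendsto_zero (hU : ∀ y, HasDerivAt U (U' y) y) (hU' : Continuous U')
    (hODE : ∀ y > 0, HasDerivAt U' (-(v * U' y)) y) (hlim : Tendsto U atTop (𝓝 0))
    (hnonneg : ∀ y ≥ 0, 0 ≤ U y) (h0 : 0 < U 0) : 0 < v := by
  by_contra! hv
  have hmono : MonotoneOn U (Ici 0) := by
    refine monotoneOn_of_deriv_nonneg (convex_Ici 0)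
      (fun y _ => (hU y).continuousAt.continuousWithinAt)
      (fun y _ => (hU y).differentiableAt.differentiableWithinAt) fun y hy => ?_
    rw [interior_Ici] at hy
    rw [(hU y).deriv, ← neg_eq_of_add_eq_zero_left
      (deriv_add_mul_eq_zero_of_tendsto hU hU' hODE hlim hy.le)]
    nlinarith [hnonneg y hy.le]
  have : U 0 ≤ 0 := ge_of_tendsto hlim <| by
    filter_upwards [eventually_ge_atTop 0] with y hy using hmono self_mem_Ici hy hy
  linarith

end

lemma IsKPP.cutoff_le_self {f : ℝ → ℝ} (hf : IsKPP f) {uc u : ℝ} (huc : 0 ≤ uc) (hu₀ : 0 ≤ u)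
    (hu₁ : u ≤ 1) : cutoff f uc u ≤ u := by
  obtain ⟨-, -, hf₁, -, -, hf_le, -⟩ := hf
  unfold cutoff
  split_ifs with h
  · rcases hu₁.eq_or_lt with rfl | hu₁
    · rw [hf₁]; exact zero_le_one
    · exact (hf_le u (huc.trans_lt h) hu₁).2
  · exact hu₀

namespace IsPTW

variable {f U : ℝ → ℝ} {uc v : ℝ}

lemma hasDerivAt (hU : IsPTW f uc v U) (y : ℝ) : HasDerivAt U (deriv U y) y :=
  (hU.1.differentiable one_ne_zero y).hasDerivAt

lemma hasDerivAt_deriv (hU : IsPTW f uc v U) {y : ℝ} (hy : y ≠ 0) :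
    HasDerivAt (deriv U) (deriv (deriv U) y) y :=
  (((hU.2.1 y hy).derivWithin (m := 1) le_rfl).differentiableAt one_ne_zero).hasDerivAt

lemma hasDerivAt_deriv_of_pos (hU : IsPTW f uc v U) {y : ℝ} (hy : 0 < y) :
    HasDerivAt (deriv U) (-(v * deriv U y)) y := by
  have ⟨_, _, hODE, _, _, hright, _, _⟩ := hU
  have hcut : cutoff f uc (U y) = 0 := if_neg (hright y hy).2.not_gt
  have hODE_y := hODE y hy.ne'
  rw [hcut] at hODE_y
  exact (hU.hasDerivAt_deriv hy.ne').congr_deriv (by linarith)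

lemma speed_pos (hU : IsPTW f uc v U) (huc : 0 < uc) : 0 < v := by
  have ⟨hC1, _, _, hU₀, _, hright, _, htop⟩ := hU
  refine coeff_pos_of_tendsto_zero hU.hasDerivAt hC1.continuous_deriv_one
    (fun y hy => hU.hasDerivAt_deriv_of_pos hy) htop (fun y hy => ?_) (hU₀ ▸ huc)
  rcases hy.eq_or_lt with rfl | hy
  · exact hU₀ ▸ huc.le
  · exact (hright y hy).1

lemma deriv_apply_zero (hU : IsPTW f uc v U) : deriv U 0 = -(v * uc) := by
  have ⟨hC1, _, _, hU₀, _, _, _, htop⟩ := hU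
  have := deriv_add_mul_eq_zero_of_tendsto hU.hasDerivAt hC1.continuous_deriv_one
    (fun y hy => hU.hasDerivAt_deriv_of_pos hy) htop le_rfl
  rw [hU₀] at this
  linarith

lemma convexOn_exp_mul_Iic (hU : IsPTW f uc v U) (hf : IsKPP f) (huc : 0 ≤ uc) (hv : 2 ≤ v) :
    ConvexOn ℝ (Iic 0) (fun y => exp (v / 2 * y) * U y) := by
  have ⟨_, _, hODE, _, hleft, _, _, _⟩ := hU
  refine convexOn_exp_mul_mul_of_deriv2_nonneg (convex_Iic 0) hU.hasDerivAt
    (fun y hy => hU.hasDerivAt_deriv (by rw [interior_Iic] at hy; exact hy.ne)) fun y hy => ?_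
  rw [interior_Iic] at hy
  obtain ⟨hUy₀, hUy₁⟩ := hleft y hy
  have hcut := hf.cutoff_le_self huc (huc.trans hUy₀) hUy₁
  have hgrowth : U y ≤ (v / 2) ^ 2 * U y :=
    le_mul_of_one_le_left (huc.trans hUy₀) (by nlinarith)
  linarith [hODE y hy.ne]

lemma speed_lt_two (hU : IsPTW f uc v U) (hf : IsKPP f) (huc : 0 < uc) : v < 2 := by
  by_contra! hv
  have ⟨_, _, _, hU₀, _, _, hbot, _⟩ := hU
  set g := fun y => exp (v / 2 * y) * U y
  have hg_deriv : HasDerivAt g (-(v * uc) / 2) 0 := by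
    have hexp : HasDerivAt (fun y => exp (v / 2 * y)) (exp (v / 2 * 0) * (v / 2)) 0 := by
      simpa using ((hasDerivAt_id (0 : ℝ)).const_mul (v / 2)).exp
    refine (hexp.mul (hU.hasDerivAt 0)).congr_deriv ?_
    rw [hU.deriv_apply_zero, hU₀]
    simp only [mul_zero, exp_zero]
    ring
  have hg_ge : ∀ y < 0, uc ≤ g y := fun y hy => by
    have hslope := (hU.convexOn_exp_mul_Iic hf huc.le hv).slope_le_of_hasDerivAt
      (le_of_lt hy : y ∈ Iic 0) (le_refl (0 : ℝ)) hy hg_deriv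
    rw [slope_def_field, div_le_iff₀ (by linarith)] at hslope
    simp only [mul_zero, exp_zero, one_mul, hU₀] at hslope
    show uc ≤ exp (v / 2 * y) * U y
    nlinarith [mul_pos (mul_pos (hU.speed_pos huc) huc) (neg_pos.2 hy)]
  have hg_lim : Tendsto g atBot (𝓝 (0 * 1)) :=
    (tendsto_exp_atBot.comp (tendsto_id.const_mul_atBot (by linarith))).mul hbot
  rw [zero_mul] at hg_lim
  have : uc ≤ 0 := ge_of_tendsto hg_lim <| by
    filter_upwards [eventually_lt_atBot 0] with y hy using hg_ge y hy
  linarith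

end IsPTW

theorem ptw_speed_bounds_general (f : ℝ → ℝ) (hf : IsKPP f) (uc : ℝ) (huc : uc ∈ Set.Ioo (0:ℝ) 1)
    (v : ℝ) (U : ℝ → ℝ) (hU : IsPTW f uc v U) : 0 < v ∧ v < 2 :=
  ⟨hU.speed_pos huc.1, hU.speed_lt_two hf huc.1⟩

/-- The unique propagation speed satisfies `0 < v* < 2`. -/
theorem ptw_speed_bounds (f : ℝ → ℝ) (hf : IsKPP f) (uc : ℝ) (huc : uc ∈ Set.Ioo (0:ℝ) 1)
    (v : ℝ) (hv : 0 ≤ v) (U : ℝ → ℝ) (hU : IsPTW f uc v U) : 0 < v ∧ v < 2 :=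
  ptw_speed_bounds_general f hf uc huc v U hU
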